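/- Let X and Y be finite, nonempty, disjoint subsets of ℝ^D, let p > 1, and set δ = min{κ(Y), d_E(X,Y)}. Then for every pair of points x, x' ∈ X with d_{X∪Y,p}(x,x') < δ^p, one has d_{X∪Y,p}(x,x') = d_{X,p}(x,x'); that is, below the threshold δ^p, the sample Fermat distance on X ∪ Y restricted to X coincides with the sample Fermat distance computed using X alone. -/

import Mathlib

/-!
A path from a point of `X` whose total cost is below `d_E(X,Y)^p` cannot make a single step
from `X` to `Y`, since that step alone costs at least `d_E(X,Y)^p`. Hence every cheap path
between points of `X` through `X ∪ Y` only visits `X`, and the two infima agree below the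
threshold `min(κ(Y), d_E(X,Y))^p ≤ d_E(X,Y)^p`.
-/

/-- The cost of a polygonal path given by the list `l` of its vertices:
the sum over consecutive pairs of the `p`-th power of the Euclidean distance. -/
noncomputable def chainCost {D : ℕ} (p : ℝ) (l : List (EuclideanSpace ℝ (Fin D))) : ℝ :=
  ((l.zip l.tail).map (fun q => dist q.1 q.2 ^ p)).sum

/-- The sample Fermat distance: `d_{S,p}(x,y)` is the infimum over all finite paths
`x = x₀, x₁, …, x_{r+1} = y` with interior points `x₁,…,x_r ∈ S` of
`Σ_{i=0}^{r} |x_{i+1} − x_i|^p`. -/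
noncomputable def fermatDist {D : ℕ} (p : ℝ) (S : Finset (EuclideanSpace ℝ (Fin D)))
    (x y : EuclideanSpace ℝ (Fin D)) : ℝ :=
  sInf {c : ℝ | ∃ l : List (EuclideanSpace ℝ (Fin D)),
    (∀ z ∈ l, z ∈ S) ∧ c = chainCost p (x :: (l ++ [y]))}

/-- The Euclidean distance `d_E(A,B) = min_{a ∈ A, b ∈ B} |a − b|` between finite sets. -/
noncomputable def setDistE {D : ℕ} (A B : Finset (EuclideanSpace ℝ (Fin D))) : ℝ :=
  sInf {d : ℝ | ∃ a ∈ A, ∃ b ∈ B, d = dist a b}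

/-- The minimal spacing `κ(B) = min_{b ∈ B} d_E({b}, B∖{b})` of a finite set. -/
noncomputable def minSpacing {D : ℕ} (B : Finset (EuclideanSpace ℝ (Fin D))) : ℝ :=
  sInf {d : ℝ | ∃ b ∈ B, ∃ b' ∈ B, b ≠ b' ∧ d = dist b b'}
noncomputable instance {D : ℕ} : DecidableEq (EuclideanSpace ℝ (Fin D)) := Classical.decEq _

section

variable {D : ℕ}

lemma chainCost_nonneg (p : ℝ) (l : List (EuclideanSpace ℝ (Fin D))) : 0 ≤ chainCost p l :=
  List.sum_nonneg fun _ ha => by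
    obtain ⟨_, _, rfl⟩ := List.mem_map.1 ha
    exact Real.rpow_nonneg dist_nonneg p

lemma chainCost_cons_cons (p : ℝ) (a b : EuclideanSpace ℝ (Fin D))
    (l : List (EuclideanSpace ℝ (Fin D))) :
    chainCost p (a :: b :: l) = dist a b ^ p + chainCost p (b :: l) := by
  simp [chainCost]

lemma setDistE_nonneg (A B : Finset (EuclideanSpace ℝ (Fin D))) : 0 ≤ setDistE A B :=
  Real.sInf_nonneg fun _ ⟨_, _, _, _, hd⟩ => hd ▸ dist_nonneg

lemma minSpacing_nonneg (B : Finset (EuclideanSpace ℝ (Fin D))) : 0 ≤ minSpacing B :=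
  Real.sInf_nonneg fun _ ⟨_, _, _, _, _, hd⟩ => hd ▸ dist_nonneg

lemma setDistE_le_dist {A B : Finset (EuclideanSpace ℝ (Fin D))}
    {a b : EuclideanSpace ℝ (Fin D)} (ha : a ∈ A) (hb : b ∈ B) : setDistE A B ≤ dist a b :=
  csInf_le ⟨0, fun _ ⟨_, _, _, _, hd⟩ => hd ▸ dist_nonneg⟩ ⟨a, ha, b, hb, rfl⟩

lemma fermatDist_le_chainCost {p : ℝ} {S : Finset (EuclideanSpace ℝ (Fin D))}
    {x y : EuclideanSpace ℝ (Fin D)} {l : List (EuclideanSpace ℝ (Fin D))}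
    (hl : ∀ z ∈ l, z ∈ S) : fermatDist p S x y ≤ chainCost p (x :: (l ++ [y])) :=
  csInf_le ⟨0, fun _ ⟨_, _, hc⟩ => hc ▸ chainCost_nonneg _ _⟩ ⟨l, hl, rfl⟩

lemma exists_chainCost_lt_of_fermatDist_lt {p c : ℝ} {S : Finset (EuclideanSpace ℝ (Fin D))}
    {x y : EuclideanSpace ℝ (Fin D)} (h : fermatDist p S x y < c) :
    ∃ l : List (EuclideanSpace ℝ (Fin D)),
      (∀ z ∈ l, z ∈ S) ∧ chainCost p (x :: (l ++ [y])) < c := by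
  obtain ⟨_, ⟨l, hl, rfl⟩, hlt⟩ :=
    exists_lt_of_csInf_lt (by exact ⟨_, [], by simp, rfl⟩) h
  exact ⟨l, hl, hlt⟩

lemma fermatDist_anti {p : ℝ} {S T : Finset (EuclideanSpace ℝ (Fin D))} (hST : S ⊆ T)
    (x y : EuclideanSpace ℝ (Fin D)) : fermatDist p T x y ≤ fermatDist p S x y :=
  le_csInf ⟨_, [], by simp, rfl⟩ fun _ ⟨_, hl, hc⟩ =>
    hc ▸ fermatDist_le_chainCost fun z hz => hST (hl z hz)

lemma forall_mem_of_chainCost_lt {p c : ℝ} {X Y : Finset (EuclideanSpace ℝ (Fin D))}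
    (hc : ∀ a ∈ X, ∀ b ∈ Y, c ≤ dist a b ^ p) (y : EuclideanSpace ℝ (Fin D)) :
    ∀ {l : List (EuclideanSpace ℝ (Fin D))} {a : EuclideanSpace ℝ (Fin D)}, a ∈ X →
      (∀ z ∈ l, z ∈ X ∪ Y) → chainCost p (a :: (l ++ [y])) < c → ∀ z ∈ l, z ∈ X
  | [], _, _, _, _ => by simp
  | b :: l, a, ha, hl, hcost => by
    rw [List.cons_append, chainCost_cons_cons] at hcost
    have hstep : dist a b ^ p < c := by linarith [chainCost_nonneg p (b :: (l ++ [y]))]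
    have hb : b ∈ X := (Finset.mem_union.1 (hl b List.mem_cons_self)).resolve_right
      fun hbY => (hc a ha b hbY).not_gt hstep
    have hrest : chainCost p (b :: (l ++ [y])) < c := by
      linarith [Real.rpow_nonneg (dist_nonneg (x := a) (y := b)) p]
    intro z hz
    rcases List.mem_cons.1 hz with rfl | hz
    · exact hb
    · exact forall_mem_of_chainCost_lt hc y hb (fun w hw => hl w (List.mem_cons_of_mem _ hw))
        hrest z hz

end

theorem fermatDist_below_threshold_eq_general {D : ℕ} (p : ℝ) (hp : 1 < p)
    (X Y : Finset (EuclideanSpace ℝ (Fin D)))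
    (x x' : EuclideanSpace ℝ (Fin D)) (hx : x ∈ X)
    (hlt : fermatDist p (X ∪ Y) x x' < min (minSpacing Y) (setDistE X Y) ^ p) :
    fermatDist p (X ∪ Y) x x' = fermatDist p X x x' := by
  set δ := min (minSpacing Y) (setDistE X Y)
  have hcross : ∀ a ∈ X, ∀ b ∈ Y, δ ^ p ≤ dist a b ^ p := fun a ha b hb =>
    Real.rpow_le_rpow (le_min (minSpacing_nonneg Y) (setDistE_nonneg X Y))
      ((min_le_right _ _).trans (setDistE_le_dist ha hb)) (by linarith)
  refine le_antisymm (fermatDist_anti Finset.subset_union_left x x')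
    (le_of_forall_gt fun c hc => ?_)
  obtain ⟨l, hl, hcost⟩ := exists_chainCost_lt_of_fermatDist_lt (lt_min hc hlt)
  have hlX : ∀ z ∈ l, z ∈ X :=
    forall_mem_of_chainCost_lt hcross x' hx hl (hcost.trans_le (min_le_right _ _))
  exact (fermatDist_le_chainCost hlX).trans_lt (hcost.trans_le (min_le_left _ _))

/-- below the threshold `δ^p`, with `δ = min{κ(Y), d_E(X,Y)}`, the sample
Fermat distance on `X ∪ Y` between points of `X` coincides with the one computed in `X`. -/
theorem fermatDist_below_threshold_eq {D : ℕ} (p : ℝ) (hp : 1 < p)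
    (X Y : Finset (EuclideanSpace ℝ (Fin D)))
    (hX : X.Nonempty) (hY : Y.Nonempty) (hdisj : Disjoint X Y)
    (x x' : EuclideanSpace ℝ (Fin D)) (hx : x ∈ X) (hx' : x' ∈ X)
    (hlt : fermatDist p (X ∪ Y) x x' < min (minSpacing Y) (setDistE X Y) ^ p) :
    fermatDist p (X ∪ Y) x x' = fermatDist p X x x' :=
  fermatDist_below_threshold_eq_general p hp X Y x x' hx hlt
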